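/- arXiv:1904.04979 — 3 statements merged into one kernel-verified Lean document; each statement's English description precedes it below -/
import Mathlib

section
/- Let G be a finite group and L a finite G-lattice. For each H ≤ G let L_H be a nonempty sublattice of L such that: (1) L_{ᵍH} = {ᵍs : s ∈ L_H} for all g ∈ G; (2) ʰs = s for all h ∈ H and s ∈ L_H; (3) s ∧ sup L_K ∈ L_K for all K ≤ H and s ∈ L_H; (4) sup L_K ≤ sup L_H for all K ≤ H. Then the assignments M_L(H) = L_H (a monoid under meet), con_H^g(s) = ᵍs, and res_K^H(s) = s ∧ sup L_K define a monoid functor for G: each con_H^g and res_K^H is a monoid homomorphism, and they satisfy the axioms con_{ʳH}^g ∘ con_H^r = con_H^{gr}, con_H^h = id for h ∈ H, res_L^K ∘ res_K^H = res_L^H, res_H^H = id, and con_K^g ∘ res_K^H = res_{ᵍK}^{ᵍH} ∘ con_H^g. -/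
set_option linter.unusedSectionVars false
set_option linter.unusedVariables false

open scoped Classical

namespace LB
noncomputable section

variable {G : Type*} [Group G]

/-- The conjugate subgroup `ᵍK = gKg⁻¹`. -/
def conjS (g : G) (K : Subgroup G) : Subgroup G :=
  K.map ((MulAut.conj g).toMonoidHom)

theorem mem_conjS {g x : G} {K : Subgroup G} : x ∈ conjS g K ↔ g⁻¹ * x * g ∈ K := by
  unfold conjS
  rw [Subgroup.mem_map]
  constructor
  · rintro ⟨y, hy, rfl⟩
    have h2 : g⁻¹ * ((MulAut.conj g).toMonoidHom y) * g = y := by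
      simp only [MulEquiv.coe_toMonoidHom, MulAut.conj_apply]; group
    rw [h2]; exact hy
  · intro h
    refine ⟨g⁻¹ * x * g, h, ?_⟩
    simp only [MulEquiv.coe_toMonoidHom, MulAut.conj_apply]; group

theorem conjS_mono (g : G) {K K' : Subgroup G} (h : K ≤ K') : conjS g K ≤ conjS g K' :=
  Subgroup.map_mono h

theorem conjS_one (K : Subgroup G) : conjS 1 K = K := by
  ext x; simp [mem_conjS]

theorem conjS_mul (g r : G) (K : Subgroup G) : conjS g (conjS r K) = conjS (g * r) K := by
  ext x
  rw [mem_conjS, mem_conjS, mem_conjS,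
    show r⁻¹ * (g⁻¹ * x * g) * r = (g * r)⁻¹ * x * (g * r) by group]

/-- The Möbius function of a finite partial order. -/
def mob {α : Type*} [PartialOrder α] [Finite α] (a b : α) : ℤ :=
  letI : Fintype α := Fintype.ofFinite α
  letI : @DecidableRel α α (· < ·) := Classical.decRel _
  letI : LocallyFiniteOrder α := Fintype.toLocallyFiniteOrder
  IncidenceAlgebra.mu ℤ a b

/-- A family of nonempty sublattices `L_H ⊆ L` of a finite `G`-lattice `L`
(for `H ≤ G`) satisfying the conditions of Proposition 4.2 of the paper; the binary
relation of `L` is required to be invariant under `G` (field `smul_le`).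
The data `top K` is the greatest element `sup L_K` of the sublattice `L_K`. -/
structure SubLatticeFamily (G : Type*) [Group G] (L : Type*) [Lattice L] [MulAction G L] where
  smul_le : ∀ (g : G) (x y : L), x ≤ y → g • x ≤ g • y
  S : Subgroup G → Set L
  nonempty : ∀ K, (S K).Nonempty
  inf_mem : ∀ (K : Subgroup G) {a b : L}, a ∈ S K → b ∈ S K → a ⊓ b ∈ S K
  sup_mem : ∀ (K : Subgroup G) {a b : L}, a ∈ S K → b ∈ S K → a ⊔ b ∈ S K
  top : Subgroup G → L
  top_mem : ∀ K, top K ∈ S K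
  le_top : ∀ K, ∀ a ∈ S K, a ≤ top K
  conj_eq : ∀ (g : G) (H : Subgroup G), S (conjS g H) = (g • ·) '' S H
  invariant : ∀ (H : Subgroup G), ∀ h ∈ H, ∀ s ∈ S H, h • s = s
  res_mem : ∀ {K H : Subgroup G}, K ≤ H → ∀ s ∈ S H, s ⊓ top K ∈ S K
  top_mono : ∀ {K H : Subgroup G}, K ≤ H → top K ≤ top H

variable {L : Type*} [Lattice L] [MulAction G L]

/-- The action of `G` on pairs `(K, s)`. -/
def dotL (g : G) (x : Subgroup G × L) : Subgroup G × L := (conjS g x.1, g • x.2)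

theorem dotL_one (x : Subgroup G × L) : dotL (1 : G) x = x := by
  simp [dotL, conjS_one]

theorem dotL_mul (g r : G) (x : Subgroup G × L) : dotL g (dotL r x) = dotL (g * r) x := by
  simp [dotL, conjS_mul, mul_smul]

variable (F : SubLatticeFamily G L)

/-- `(K,s) ∈ S(H, M_L)`: the pairs `(K,s)` with `K ≤ H` and `s ∈ L_K`. -/
def memS (H : Subgroup G) (x : Subgroup G × L) : Prop := x.1 ≤ H ∧ x.2 ∈ F.S x.1

/-- `N_H(K,s)`, the stabilizer in `H` of the pair `(K,s)`. -/
def NL (H : Subgroup G) (x : Subgroup G × L) : Subgroup G where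
  carrier := {g | g ∈ H ∧ dotL g x = x}
  one_mem' := ⟨H.one_mem, dotL_one x⟩
  mul_mem' := by
    rintro a b ⟨ha, da⟩ ⟨hb, db⟩
    exact ⟨H.mul_mem ha hb, by rw [← dotL_mul, db, da]⟩
  inv_mem' := by
    rintro a ⟨ha, da⟩
    refine ⟨H.inv_mem ha, ?_⟩
    conv_lhs => rw [← da]
    rw [dotL_mul, inv_mul_cancel, dotL_one]

/-- `|W_H(K,s)| = |N_H(K,s)/K|`. -/
def WCardL (H : Subgroup G) (x : Subgroup G × L) : ℕ := (x.1.subgroupOf (NL H x)).index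

/-- A complete set of representatives `R(H, M_L)` of the `H`-orbits of `S(H, M_L)`. -/
structure RepsL (F : SubLatticeFamily G L) (H : Subgroup G) where
  R : Set (Subgroup G × L)
  subset : ∀ x ∈ R, memS F H x
  complete : ∀ x, memS F H x → ∃! y, y ∈ R ∧ ∃ h ∈ H, dotL h x = y

variable {H : Subgroup G}

/-- The coordinate of a tuple indexed by a set of representatives at (the orbit of) an
arbitrary pair. -/
def coordAtL {A : Type*} [AddCommMonoid A] (ι : Set (Subgroup G × L)) (H : Subgroup G)
    (v : ↥ι → A) (y : Subgroup G × L) : A :=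
  ∑ᶠ (k : ↥ι) (_ : ∃ h ∈ H, dotL h y = ↑k), v k

/-- The class `[(H/K)_s]` expressed with respect to a family indexed by a set of
representatives: it picks out the member of the family lying in the orbit of `(K,s)`. -/
def clsSumL {A : Type*} [AddCommMonoid A] (ι : Set (Subgroup G × L)) (H : Subgroup G)
    (e : ↥ι → A) (y : Subgroup G × L) : A :=
  coordAtL ι H e y

/-- `#{hK ∈ H/K : U ≤ ʰK and t ≤ ʰs}` for `x = (K,s)`, `u = (U,t)`. -/
def invCountLe (H : Subgroup G) (x u : Subgroup G × L) : ℕ :=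
  Nat.card {q : ↥H ⧸ x.1.subgroupOf H //
    ∃ h : ↥H, QuotientGroup.mk h = q ∧ u.1 ≤ conjS (h : G) x.1 ∧ u.2 ≤ (h : G) • x.2}

/-- `#{hK ∈ H/K : U ≤ ʰK and t = res_U(ʰs) = ʰs ∧ sup L_U}` for `x = (K,s)`, `u = (U,t)`. -/
def invCountEq (F : SubLatticeFamily G L) (H : Subgroup G) (x u : Subgroup G × L) : ℕ :=
  Nat.card {q : ↥H ⧸ x.1.subgroupOf H //
    ∃ h : ↥H, QuotientGroup.mk h = q ∧ u.1 ≤ conjS (h : G) x.1 ∧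
      u.2 = ((h : G) • x.2) ⊓ F.top u.1}

/-- The mark homomorphism `φ_H` (in coordinates w.r.t. the basis `[(H/K)_s]`). -/
def phiL (R : RepsL F H) (f : ↥R.R → ℤ) : ↥R.R → ℤ :=
  fun u => ∑ᶠ k : ↥R.R, f k * (invCountEq F H k.1 u.1 : ℤ)

/-- The map `α̃_H` of Theorem 4.10 (in coordinates). -/
def alphaTL (R : RepsL F H) (f : ↥R.R → ℤ) : ↥R.R → ℤ :=
  fun u => ∑ᶠ k : ↥R.R, f k * (invCountLe H k.1 u.1 : ℤ)

/-- The subgroup `⟨r⟩U` generated by `r` and `U`. -/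
def cyc (r : G) (U : Subgroup G) : Subgroup G := Subgroup.closure {r} ⊔ U

/-- The least element of `{s ∈ L_P : s ≥ t}` (junk value if there is none). -/
def leastGE [Nonempty L] (P : Subgroup G) (t : L) : L :=
  Classical.epsilon fun s => (s ∈ F.S P ∧ t ≤ s) ∧ ∀ s', s' ∈ F.S P ∧ t ≤ s' → s ≤ s'

/-- The order of a Sylow `p`-subgroup of a group of order `n`; for `p = 0`
(representing `p = ∞`) it is `n` itself. -/
def sylCard (p n : ℕ) : ℕ := if p = 0 then n else p ^ (n.factorization p)

/-- The multiplicative set `ℤ ∖ (p)` (for `p` prime), resp. the units of `ℤ` (for `p = 0`,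
representing `p = ∞`), so that `Localization (locMon p hp)` is `ℤ_(p)`, resp. `ℤ`. -/
def locMon (p : ℕ) (hp : p = 0 ∨ p.Prime) : Submonoid ℤ where
  carrier := {k | if p = 0 then IsUnit k else ¬ (p : ℤ) ∣ k}
  one_mem' := by
    rcases hp with h | h
    · simp [h]
    · simp only [Set.mem_setOf_eq, if_neg h.ne_zero]
      intro hd
      exact h.one_lt.ne' (by exact_mod_cast Int.eq_one_of_dvd_one (by positivity) hd)
  mul_mem' := by
    intro a b ha hb
    rcases hp with h | h
    · simp only [Set.mem_setOf_eq, if_pos h] at *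
      exact ha.mul hb
    · simp only [Set.mem_setOf_eq, if_neg h.ne_zero] at *
      intro hd
      rcases ((Nat.prime_iff_prime_int.mp h).dvd_mul.mp hd) with h1 | h1
      · exact ha h1
      · exact hb h1

/-- `ℤ_(p)` (with `ℤ_(0)` interpreted as `ℤ_(∞) = ℤ`). -/
abbrev Zp (p : ℕ) (hp : p = 0 ∨ p.Prime) := Localization (locMon p hp)



/-- The map `α_H^{(p)}`. -/
def alphaL {A : Type*} [AddCommMonoid A] [Finite L] (R : RepsL F H) (x : ↥R.R → A) :
    ↥R.R → A :=
  fun u => ∑ᶠ (s : L) (_ : s ∈ F.S u.1.1 ∧ u.1.2 ≤ s), coordAtL R.R H x (u.1.1, s)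

/-- The map `β_H^{(p)}`, defined via the Möbius functions of the posets `L_U`. -/
def betaL {A : Type*} [AddCommGroup A] [Finite L] (R : RepsL F H) (x : ↥R.R → A) :
    ↥R.R → A :=
  fun u => ∑ᶠ (s : L) (hs : s ∈ F.S u.1.1 ∧ u.1.2 ≤ s),
    mob (⟨u.1.2, (R.subset u.1 u.2).2⟩ : ↥(F.S u.1.1)) ⟨s, hs.1⟩ •
      coordAtL R.R H x (u.1.1, s)

variable (p : ℕ) (hp : p = 0 ∨ p.Prime)

/-- `Obs(H, M_L)_(p)`. -/
abbrev ObsL (R : RepsL F H) :=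
  ∀ u : ↥R.R, Zp p hp ⧸ Ideal.span {(sylCard p (WCardL H u.1) : Zp p hp)}

/-- The Cauchy–Frobenius map `ψ̃_H^{(p)}`; `P u` is the choice of the subgroup of
`N_H(U,t)` containing `U` with `(P u)/U` the Sylow `p`-subgroup `W_H(U,t)_p`. -/
def psiTL (R : RepsL F H) (P : ↥R.R → Subgroup G) (x : ↥R.R → Zp p hp) : ObsL F p hp R :=
  fun u => Ideal.Quotient.mk _ (∑ᶠ q : ↥(P u) ⧸ (u.1.1.subgroupOf (P u)),
    ∑ᶠ (s : L) (_ : s ∈ F.S (cyc ((Quotient.out q : ↥(P u)) : G) u.1.1) ∧ u.1.2 ≤ s),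
      coordAtL R.R H x (cyc ((Quotient.out q : ↥(P u)) : G) u.1.1, s))

/-- The map `β̃_H^{(p)}`. -/
def betaTL [Nonempty L] (R : RepsL F H) (P : ↥R.R → Subgroup G) (x : ↥R.R → Zp p hp) :
    ObsL F p hp R :=
  fun u => Ideal.Quotient.mk _ (∑ᶠ q : ↥(P u) ⧸ (u.1.1.subgroupOf (P u)),
    coordAtL R.R H x (cyc ((Quotient.out q : ↥(P u)) : G) u.1.1,
      leastGE F (cyc ((Quotient.out q : ↥(P u)) : G) u.1.1) u.1.2))

/-- `φ_H^{(p)}` with `ℤ_(p)`-coefficients. -/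
def phiLp (R : RepsL F H) (f : ↥R.R → Zp p hp) : ↥R.R → Zp p hp :=
  fun u => ∑ᶠ k : ↥R.R, f k * (invCountEq F H k.1 u.1 : Zp p hp)

/-- The pair `(K ∩ ʰU, res(s ∧ ʰt))` appearing in the product formula. -/
def prodPairL (h : G) (x y : Subgroup G × L) : Subgroup G × L :=
  (x.1 ⊓ conjS h y.1, (x.2 ⊓ h • y.2) ⊓ F.top (x.1 ⊓ conjS h y.1))
/-- The sublattice `L_K`, viewed as a monoid under meet, with identity `sup L_K`. -/
instance latticeMonoid (K : Subgroup G) : Monoid ↥(F.S K) where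
  mul a b := ⟨a.1 ⊓ b.1, F.inf_mem K a.2 b.2⟩
  one := ⟨F.top K, F.top_mem K⟩
  mul_assoc a b c := Subtype.ext (inf_assoc a.1 b.1 c.1)
  one_mul a := Subtype.ext (inf_eq_right.mpr (F.le_top K a.1 a.2))
  mul_one a := Subtype.ext (inf_eq_left.mpr (F.le_top K a.1 a.2))

/-- The conjugation map `con_H^g : L_H → L_{ᵍH}`, `s ↦ ᵍs`. -/
def conMap (g : G) (K : Subgroup G) (a : ↥(F.S K)) : ↥(F.S (conjS g K)) :=
  ⟨g • a.1, by rw [F.conj_eq g K]; exact ⟨a.1, a.2, rfl⟩⟩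

/-- The restriction map `res_K^H : L_H → L_K`, `s ↦ s ∧ sup L_K`. -/
def resMap {K K' : Subgroup G} (h : K ≤ K') (a : ↥(F.S K')) : ↥(F.S K) :=
  ⟨a.1 ⊓ F.top K, F.res_mem h a.1 a.2⟩

def smulOrderIso (hmono : ∀ g : G, Monotone (g • · : L → L)) (g : G) : L ≃o L :=
  (MulAction.toPerm g).toOrderIso (hmono g) (hmono g⁻¹)

theorem smul_inf_of_monotone (hmono : ∀ g : G, Monotone (g • · : L → L)) (g : G) (a b : L) :
    g • (a ⊓ b) = g • a ⊓ g • b :=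
  (smulOrderIso hmono g).map_inf a b

theorem conjS_eq_self_of_mem {h : G} {K : Subgroup G} (hh : h ∈ K) : conjS h K = K := by
  ext x
  rw [mem_conjS, K.mul_mem_cancel_right hh, K.mul_mem_cancel_left (K.inv_mem hh)]

namespace SubLatticeFamily

include F in
theorem smul_inf (g : G) (a b : L) : g • (a ⊓ b) = g • a ⊓ g • b :=
  smul_inf_of_monotone F.smul_le g a b

theorem isGreatest_top (K : Subgroup G) : IsGreatest (F.S K) (F.top K) :=
  ⟨F.top_mem K, F.le_top K⟩

theorem top_conjS (g : G) (K : Subgroup G) : F.top (conjS g K) = g • F.top K := by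
  have h := Monotone.map_isGreatest (F.smul_le g) (F.isGreatest_top K)
  rw [← F.conj_eq g K] at h
  exact (F.isGreatest_top _).unique h

end SubLatticeFamily

theorem conMap_mul (g : G) (K : Subgroup G) (a b : ↥(F.S K)) :
    conMap F g K (a * b) = conMap F g K a * conMap F g K b :=
  Subtype.ext (F.smul_inf g a b)

theorem conMap_one (g : G) (K : Subgroup G) : conMap F g K 1 = 1 :=
  Subtype.ext (F.top_conjS g K).symm

theorem resMap_mul {K K' : Subgroup G} (h : K ≤ K') (a b : ↥(F.S K')) :
    resMap F h (a * b) = resMap F h a * resMap F h b :=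
  Subtype.ext (inf_inf_distrib_right (a : L) b (F.top K))

theorem resMap_one {K K' : Subgroup G} (h : K ≤ K') : resMap F h (1 : ↥(F.S K')) = 1 :=
  Subtype.ext (inf_eq_right.mpr (F.top_mono h))

theorem conMap_conMap (g r : G) (K : Subgroup G) (a : ↥(F.S K)) :
    (⟨conjS g (conjS r K), conMap F g (conjS r K) (conMap F r K a)⟩ :
        Σ K : Subgroup G, ↥(F.S K)) = ⟨conjS (g * r) K, conMap F (g * r) K a⟩ :=
  Sigma.subtype_ext (conjS_mul g r K) (smul_smul g r (a : L))

theorem conMap_of_mem {K : Subgroup G} {h : G} (hh : h ∈ K) (a : ↥(F.S K)) :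
    (⟨conjS h K, conMap F h K a⟩ : Σ K : Subgroup G, ↥(F.S K)) = ⟨K, a⟩ :=
  Sigma.subtype_ext (conjS_eq_self_of_mem hh) (F.invariant K h hh a a.2)

theorem resMap_resMap {K₀ K K' : Subgroup G} (h₁ : K₀ ≤ K) (h₂ : K ≤ K') (a : ↥(F.S K')) :
    resMap F h₁ (resMap F h₂ a) = resMap F (h₁.trans h₂) a :=
  Subtype.ext <| (inf_assoc _ _ _).trans <|
    congrArg ((a : L) ⊓ ·) (inf_eq_right.mpr (F.top_mono h₁))

theorem resMap_self (K : Subgroup G) (a : ↥(F.S K)) : resMap F le_rfl a = a :=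
  Subtype.ext (inf_eq_left.mpr (F.le_top K a a.2))

theorem conMap_resMap (g : G) {K K' : Subgroup G} (h : K ≤ K') (a : ↥(F.S K')) :
    conMap F g K (resMap F h a) = resMap F (conjS_mono g h) (conMap F g K' a) :=
  Subtype.ext <| (F.smul_inf g _ _).trans <|
    congrArg (g • (a : L) ⊓ ·) (F.top_conjS g K).symm

/-- Given a family of nonempty sublattices `L_H` of a finite `G`-lattice
`L` satisfying conditions (1)–(4), the assignments `M_L(H) = L_H` (a monoid under meet),
`con_H^g(s) = ᵍs` and `res_K^H(s) = s ∧ sup L_K` define a monoid functor for `G`: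
the conjugation and restriction maps are monoid homomorphisms, and the axioms (M.1),
(M.2), (M.3) of a monoid functor hold. -/
theorem lattice_monoid_functor :
    -- the conjugation maps are monoid homomorphisms
    (∀ (g : G) (K : Subgroup G) (a b : ↥(F.S K)),
        conMap F g K (a * b) = conMap F g K a * conMap F g K b) ∧
    (∀ (g : G) (K : Subgroup G), conMap F g K 1 = 1) ∧
    -- the restriction maps are monoid homomorphisms
    (∀ (K K' : Subgroup G) (h : K ≤ K') (a b : ↥(F.S K')),
        resMap F h (a * b) = resMap F h a * resMap F h b) ∧
    (∀ (K K' : Subgroup G) (h : K ≤ K'), resMap F h (1 : ↥(F.S K')) = 1) ∧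
    -- (M.1):  con_{ʳH}^g ∘ con_H^r = con_H^{gr}  and  con_H^h = id for h ∈ H
    (∀ (g r : G) (K : Subgroup G) (a : ↥(F.S K)),
        (⟨conjS g (conjS r K), conMap F g (conjS r K) (conMap F r K a)⟩ :
            Σ K : Subgroup G, ↥(F.S K))
          = ⟨conjS (g * r) K, conMap F (g * r) K a⟩) ∧
    (∀ (K : Subgroup G) (h : G), h ∈ K → ∀ a : ↥(F.S K),
        (⟨conjS h K, conMap F h K a⟩ : Σ K : Subgroup G, ↥(F.S K)) = ⟨K, a⟩) ∧
    -- (M.2):  res_L^K ∘ res_K^H = res_L^H  and  res_H^H = id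
    (∀ (K₀ K K' : Subgroup G) (h1 : K₀ ≤ K) (h2 : K ≤ K') (a : ↥(F.S K')),
        resMap F h1 (resMap F h2 a) = resMap F (h1.trans h2) a) ∧
    (∀ (K : Subgroup G) (a : ↥(F.S K)), resMap F le_rfl a = a) ∧
    -- (M.3):  con_K^g ∘ res_K^H = res_{ᵍK}^{ᵍH} ∘ con_H^g
    (∀ (g : G) (K K' : Subgroup G) (h : K ≤ K') (a : ↥(F.S K')),
        conMap F g K (resMap F h a) = resMap F (conjS_mono g h) (conMap F g K' a)) := by
  exact ⟨conMap_mul F, conMap_one F, fun _ _ => resMap_mul F, fun _ _ => resMap_one F,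
    conMap_conMap F, fun _ _ => conMap_of_mem F, fun _ _ _ => resMap_resMap F,
    resMap_self F, fun g _ _ => conMap_resMap F g⟩

end
end LB
end

section
/- Let G be a finite group, L a finite G-lattice with a family of nonempty sublattices L_H as in the lattice Burnside ring setting, and H ≤ G. The Z_(p)-module homomorphism ψ̃_H^{(p)} : Ω̃(H,M_L)_(p) → Obs(H,M_L)_(p) sending (x_{(K,s)})_{(K,s)∈R(H,M_L)} to (Σ_{rU ∈ W_H(U,t)_p} Σ_{s ∈ L_{⟨r⟩U}, s ≥ t} x_{(⟨r⟩U,s)} mod |W_H(U,t)_p|)_{(U,t)∈R(H,M_L)} is surjective. -/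
set_option linter.unusedSectionVars false
set_option linter.unusedVariables false

open scoped Classical

namespace LB
noncomputable section

variable {G : Type*} [Group G]

variable {L : Type*} [Lattice L] [MulAction G L]

variable (F : SubLatticeFamily G L)

variable {H : Subgroup G}

variable (p : ℕ) (hp : p = 0 ∨ p.Prime)

/-! The lift of `ψ̃` to `Ω̃ → Ω̃` is unitriangular. In the `(U,t)`-coordinate the trivial coset with
`s = t` contributes `x_(U,t)`, and every other term is read off at a pair `(⟨r⟩U, s)` lying
strictly above `(U,t)` in the product order; `|K| (|L| + 1) + #{x ≤ s}` is a `G`-invariant weight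
that is strictly monotone in that order. So the lift is `1 + E` with `E` nilpotent, hence
bijective, and `ψ̃` is surjective onto the quotient. -/

theorem surjective_of_unitriangular {ι A : Type*} [Finite ι] [AddCommGroup A]
    (T : AddMonoid.End (ι → A)) (μ : ι → ℕ)
    (hT : ∀ x i, (∀ j, μ i < μ j → x j = 0) → T x i = x i) :
    Function.Surjective T := by
  obtain ⟨N, hN⟩ := (Set.finite_range μ).bddAbove
  let E := T - 1
  have hE : ∀ n x i, N < μ i + n → (E ^ n) x i = 0 := by
    intro n
    induction n with
    | zero => exact fun x i h => absurd (hN ⟨i, rfl⟩) (by omega)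
    | succ n ih =>
      intro x i h
      rw [pow_succ']
      show T ((E ^ n) x) i - (E ^ n) x i = 0
      rw [sub_eq_zero]
      exact hT _ i fun j hj => ih x j (by omega)
  have hnil : IsNilpotent E := ⟨N + 1, by ext x i; exact hE _ x i (by omega)⟩
  obtain ⟨e, he⟩ := hnil.isUnit_add_one
  have hT : (e : AddMonoid.End (ι → A)) = T := he.trans (sub_add_cancel T 1)
  intro y
  exact ⟨(↑e⁻¹ : AddMonoid.End (ι → A)) y, by rw [← hT]; exact congr($(e.mul_inv) y)⟩

def pairWeight {α : Type*} [Preorder α] (z : Subgroup G × α) : ℕ :=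
  Nat.card z.1 * (Nat.card α + 1) + (Set.Iic z.2).ncard

theorem pairWeight_strictMono [Finite G] {α : Type*} [Preorder α] [Finite α] :
    StrictMono (pairWeight : Subgroup G × α → ℕ) := by
  intro z w hzw
  have hIic : (Set.Iic z.2).ncard ≤ Nat.card α := Set.ncard_le_card _
  rcases Prod.lt_iff.1 hzw with ⟨hK, -⟩ | ⟨hK, hs⟩
  · have hcard : Nat.card z.1 < Nat.card w.1 := by
      rw [← SetLike.coe_sort_coe, ← SetLike.coe_sort_coe, Nat.card_coe_set_eq,
        Nat.card_coe_set_eq]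
      exact Set.ncard_lt_ncard (SetLike.coe_ssubset_coe.2 hK)
    unfold pairWeight
    nlinarith
  · have hcard : (Set.Iic z.2).ncard < (Set.Iic w.2).ncard :=
      Set.ncard_lt_ncard (Set.Iic_ssubset_Iic.2 hs)
    have hcard' : Nat.card z.1 ≤ Nat.card w.1 := Subgroup.card_le_of_le hK
    unfold pairWeight
    nlinarith

theorem pairWeight_dotL (hmono : ∀ g : G, Monotone (g • · : L → L)) (g : G)
    (z : Subgroup G × L) : pairWeight (dotL g z) = pairWeight z := by
  have hIic : Set.Iic (g • z.2) = (g • ·) '' Set.Iic z.2 := by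
    ext x
    refine ⟨fun hx => ⟨g⁻¹ • x, ?_, smul_inv_smul g x⟩, ?_⟩
    · simpa using hmono g⁻¹ hx
    · rintro ⟨y, hy, rfl⟩
      exact hmono g hy
  unfold pairWeight dotL
  rw [hIic, Set.ncard_image_of_injective _ (MulAction.injective g), conjS,
    Subgroup.card_map_of_injective (MulAut.conj g).injective]

theorem coordAtL_add [Finite G] [Finite L] {A : Type*} [AddCommMonoid A]
    (ι : Set (Subgroup G × L)) (x y : ↥ι → A) (z : Subgroup G × L) :
    coordAtL ι H (x + y) z = coordAtL ι H x z + coordAtL ι H y z :=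
  finsum_mem_add_distrib' (Set.toFinite _) (Set.toFinite _)

theorem coordAtL_eq_zero_of_lt_pairWeight (hmono : ∀ g : G, Monotone (g • · : L → L))
    {A : Type*} [AddCommMonoid A] (ι : Set (Subgroup G × L)) (x : ↥ι → A) {w : ℕ}
    (hx : ∀ k : ↥ι, w < pairWeight k.1 → x k = 0) {z : Subgroup G × L}
    (hz : w < pairWeight z) : coordAtL ι H x z = 0 := by
  refine finsum_mem_eq_zero_of_forall_eq_zero ?_
  rintro k ⟨h, -, hk⟩
  exact hx k (by rwa [← hk, pairWeight_dotL hmono])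

theorem coordAtL_of_mem {A : Type*} [AddCommMonoid A] (R : RepsL F H) (x : ↥R.R → A)
    (u : ↥R.R) : coordAtL R.R H x u = x u := by
  have hself : ∃ h ∈ H, dotL h u.1 = u.1 := ⟨1, H.one_mem, dotL_one _⟩
  have horbit : ∀ k : ↥R.R, (∃ h ∈ H, dotL h u.1 = k.1) → k = u := fun k hk =>
    Subtype.ext <| (R.complete u.1 (R.subset u.1 u.2)).unique ⟨k.2, hk⟩ ⟨u.2, hself⟩
  rw [coordAtL, finsum_eq_single (fun k : ↥R.R => ∑ᶠ (_ : ∃ h ∈ H, dotL h u.1 = k.1), x k) u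
    fun k hk => finsum_eq_if.trans (if_neg (mt (horbit k) hk)), finsum_eq_if, if_pos hself]

theorem cyc_eq_self_iff {r : G} {U : Subgroup G} : cyc r U = U ↔ r ∈ U := by
  rw [cyc, sup_eq_right, Subgroup.closure_le, Set.singleton_subset_iff, SetLike.mem_coe]

theorem coe_out_mem_iff {K U : Subgroup G} (q : K ⧸ U.subgroupOf K) :
    ((q.out : K) : G) ∈ U ↔ q = ((1 : K) : K ⧸ U.subgroupOf K) := by
  conv_rhs => rw [← QuotientGroup.out_eq' q]
  rw [QuotientGroup.eq, mul_one, inv_mem_iff, Subgroup.mem_subgroupOf]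

def cfSum {A : Type*} [AddCommMonoid A] (R : RepsL F H) (P : ↥R.R → Subgroup G)
    (x : ↥R.R → A) : ↥R.R → A :=
  fun u => ∑ᶠ q : ↥(P u) ⧸ (u.1.1.subgroupOf (P u)),
    ∑ᶠ (s : L) (_ : s ∈ F.S (cyc ((Quotient.out q : ↥(P u)) : G) u.1.1) ∧ u.1.2 ≤ s),
      coordAtL R.R H x (cyc ((Quotient.out q : ↥(P u)) : G) u.1.1, s)

theorem psiTL_apply (R : RepsL F H) (P : ↥R.R → Subgroup G) (x : ↥R.R → Zp p hp)
    (u : ↥R.R) : psiTL F p hp R P x u = Ideal.Quotient.mk _ (cfSum F R P x u) :=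
  rfl

def cfSumHom [Finite G] [Finite L] {A : Type*} [AddCommMonoid A] (R : RepsL F H)
    (P : ↥R.R → Subgroup G) : (↥R.R → A) →+ (↥R.R → A) where
  toFun := cfSum F R P
  map_zero' := by
    funext u
    simp [cfSum, coordAtL]
  map_add' x y := by
    funext u
    simp only [cfSum, coordAtL_add, Pi.add_apply]
    rw [← finsum_add_distrib (Set.toFinite _) (Set.toFinite _)]
    exact finsum_congr fun q => finsum_mem_add_distrib' (Set.toFinite _) (Set.toFinite _)

theorem cfSum_eq_self [Finite G] [Finite L] {A : Type*} [AddCommMonoid A] (R : RepsL F H)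
    (P : ↥R.R → Subgroup G) (x : ↥R.R → A) (u : ↥R.R)
    (hx : ∀ v : ↥R.R, pairWeight u.1 < pairWeight v.1 → x v = 0) :
    cfSum F R P x u = x u := by
  have hvanish : ∀ (K : Subgroup G) (s : L), u.1.1 ≤ K → u.1.2 ≤ s → (K, s) ≠ u.1 →
      coordAtL R.R H x (K, s) = 0 := fun K s hK hts hne =>
    coordAtL_eq_zero_of_lt_pairWeight (fun g _ _ => F.smul_le g _ _) R.R x hx
      (pairWeight_strictMono (lt_of_le_of_ne ⟨hK, hts⟩ hne.symm))
  unfold cfSum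
  rw [finsum_eq_single _ ((1 : ↥(P u)) : ↥(P u) ⧸ u.1.1.subgroupOf (P u))]
  · rw [cyc_eq_self_iff.2 ((coe_out_mem_iff _).2 rfl), finsum_eq_single _ u.1.2,
      finsum_eq_if, if_pos ⟨(R.subset u u.2).2, le_rfl⟩]
    · exact coordAtL_of_mem F R x u
    · intro s hs
      refine finsum_eq_if.trans (ite_eq_right_iff.2 fun hts => hvanish _ s le_rfl hts.2 ?_)
      simpa [Prod.ext_iff] using hs
  · intro q hq
    refine finsum_mem_eq_zero_of_forall_eq_zero fun s hts =>
      hvanish _ s le_sup_right hts.2 fun h => hq ?_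
    exact (coe_out_mem_iff q).1 (cyc_eq_self_iff.1 (congrArg Prod.fst h))

theorem lattice_psi_surjective [Finite G] [Finite L] (R : RepsL F H)
    (P : ↥R.R → Subgroup G) :
    Function.Surjective (psiTL F p hp R P) := by
  intro y
  choose z hz using fun u => Ideal.Quotient.mk_surjective (y u)
  obtain ⟨x, hx⟩ := surjective_of_unitriangular (A := Zp p hp) (cfSumHom F R P)
    (fun u => pairWeight u.1) (cfSum_eq_self F R P) z
  exact ⟨x, funext fun u => by rw [psiTL_apply, ← hz u, ← hx]; rfl⟩

end
end LB
end

section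
/- Let G be a finite group and L a finite G-lattice with a family of nonempty sublattices L_H as in the lattice Burnside ring setting. Let ∼_p be the equivalence relation on S(G,M_L) generated by (⟨g⟩U, s_{(g,t)}) ∼_p (U,t) for (U,t) ∈ S(G,M_L) and gU ∈ W_G(U,t)_p, where s_{(g,t)} = inf{s ∈ L_{⟨g⟩U} : s ≥ t}. If (K,s) ∼_p (U,t), then O^p(K) is conjugate to O^p(U) in G. -/
set_option linter.unusedSectionVars false
set_option linter.unusedVariables false

open scoped Classical

namespace LB
noncomputable section

variable {G : Type*} [Group G]

variable {L : Type*} [Lattice L] [MulAction G L]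

variable (F : SubLatticeFamily G L)

variable {H : Subgroup G}

variable (p : ℕ) (hp : p = 0 ∨ p.Prime)

/-- The generating relation of `∼_p`:
`(⟨g⟩U, s_{(g,t)}) ∼ (U,t)` for `(U,t) ∈ S(G, M_L)` and `gU ∈ W_G(U,t)_p`
(membership of `gU` in a Sylow `p`-subgroup of `W_G(U,t)` being expressed by membership
of `g` in a subgroup `P` with `U ≤ P ≤ N_G(U,t)` and `|P/U| = |W_G(U,t)_p|`). -/
def pRel [Nonempty L] (p : ℕ) : (Subgroup G × L) → (Subgroup G × L) → Prop := fun a b =>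
  memS F ⊤ b ∧ ∃ g : G,
    (∃ P : Subgroup G, b.1 ≤ P ∧ P ≤ NL ⊤ b ∧
      (b.1.subgroupOf P).index = sylCard p (WCardL ⊤ b) ∧ g ∈ P) ∧
    a = (cyc g b.1, leastGE F (cyc g b.1) b.2)

/-- `O^p(K)` for a prime `p`: the smallest normal subgroup of `K` with `p`-group
quotient; for `p = 0` (representing `p = ∞`): the intersection of the derived series
of `K`. -/
def Ores (p : ℕ) (K : Subgroup G) : Subgroup G :=
  if p = 0 then ⨅ n : ℕ, (derivedSeries ↥K n).map K.subtype
  else sInf {N' : Subgroup G | N' ≤ K ∧ (N'.subgroupOf K).Normal ∧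
    ∃ n : ℕ, (N'.subgroupOf K).index = p ^ n}

/-! In a generating step `(⟨g⟩U, s_{(g,t)}) ∼_p (U,t)`, `g` normalizes `U`, so `U` is normal in
`K = ⟨g⟩U` with `K/U` cyclic of order dividing `|W_G(U,t)_p|`. For `p = ∞` the quotient is
abelian, so the derived series of `K` lands in `U` after one step and the two series have the
same intersection. For `p` prime, `K/U` is a `p`-group; `O^p(U)` is invariant under the
automorphisms of `U` induced by `K`, hence normal of `p`-power index in `K`, and minimality
on both sides gives `O^p(K) = O^p(U)`. (For composite `p`, `sylCard p n = 1` forces `K = U`.)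
So `O^p` is constant on `∼_p`-classes and `g = 1` is a conjugating element. -/

theorem map_derivedSeries_add_le {A B : Type*} [Group A] [Group B] (f : A →* G) (f' : B →* G)
    {m k : ℕ} (h : (derivedSeries A m).map f ≤ (derivedSeries B k).map f') (n : ℕ) :
    (derivedSeries A (m + n)).map f ≤ (derivedSeries B (k + n)).map f' := by
  induction n with
  | zero => exact h
  | succ n ih =>
    rw [← add_assoc, ← add_assoc, derivedSeries_succ, derivedSeries_succ,
      Subgroup.map_commutator, Subgroup.map_commutator]
    exact Subgroup.commutator_mono ih ih

theorem Ores_zero_eq_of_commutator_le {U K : Subgroup G} (hUK : U ≤ K) (hK : ⁅K, K⁆ ≤ U) :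
    Ores 0 K = Ores 0 U := by
  have hU : (derivedSeries U 0).map U.subtype ≤ (derivedSeries K 0).map K.subtype := by
    simpa [derivedSeries_zero, ← MonoidHom.range_eq_map] using hUK
  have hK' : (derivedSeries K 1).map K.subtype ≤ (derivedSeries U 0).map U.subtype := by
    rwa [derivedSeries_one, Subgroup.map_subtype_commutator, derivedSeries_zero,
      ← MonoidHom.range_eq_map, Subgroup.range_subtype]
  simp only [Ores, if_pos]
  refine le_antisymm (le_iInf fun n => (iInf_le _ (1 + n)).trans ?_)
    (le_iInf fun n => (iInf_le _ n).trans ?_)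
  · simpa using map_derivedSeries_add_le _ _ hK' n
  · simpa using map_derivedSeries_add_le _ _ hU n

theorem commutator_sup_le_of_le_normalizer {H U : Subgroup G} [IsMulCommutative H]
    (hH : H ≤ Subgroup.normalizer (U : Set G)) : ⁅H ⊔ U, H ⊔ U⁆ ≤ U := by
  have : (U.subgroupOf (H ⊔ U)).Normal := Subgroup.normal_subgroupOf_sup_of_le_normalizer hH
  have hcomm : commutator ↥(H ⊔ U) ≤ U.subgroupOf (H ⊔ U) :=
    Subgroup.Normal.commutator_le_of_self_sup_commutative_eq_top
      (sup_comm (H.subgroupOf (H ⊔ U)) _ ▸ (Subgroup.codisjoint_subgroupOf_sup H U).eq_top)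
      inferInstance
  rw [← Subgroup.map_subtype_commutator]
  exact (Subgroup.map_mono hcomm).trans (by simp [Subgroup.subgroupOf_map_subtype])

def normalPPowIndex (p : ℕ) (K : Subgroup G) : Set (Subgroup G) :=
  {N | N ≤ K ∧ (N.subgroupOf K).Normal ∧ ∃ n : ℕ, N.relIndex K = p ^ n}

theorem mem_normalPPowIndex_iff {p : ℕ} {N K : Subgroup G} :
    N ∈ normalPPowIndex p K ↔
      N ≤ K ∧ K ≤ Subgroup.normalizer (N : Set G) ∧ ∃ n : ℕ, N.relIndex K = p ^ n :=
  and_congr_right fun hNK => and_congr_left fun _ =>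
    Subgroup.normal_subgroupOf_iff_le_normalizer hNK

theorem self_mem_normalPPowIndex (p : ℕ) (K : Subgroup G) : K ∈ normalPPowIndex p K :=
  ⟨le_rfl, by rw [Subgroup.subgroupOf_self]; infer_instance, 0, by simp⟩

theorem exists_eq_pow_of_dvd_pow {p a n : ℕ} (hp : p.Prime) (h : a ∣ p ^ n) : ∃ m, a = p ^ m :=
  let ⟨m, _, hm⟩ := (Nat.dvd_prime_pow hp).1 h; ⟨m, hm⟩

theorem infClosed_normalPPowIndex {p : ℕ} (hp : p.Prime) (K : Subgroup G) :
    InfClosed (normalPPowIndex p K) := by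
  rintro A ⟨hAK, hAn, a, ha⟩ B ⟨hBK, hBn, b, hb⟩
  have hdvd : A.relIndex B ∣ A.relIndex K :=
    Subgroup.relIndex_subgroupOf hBK ▸ Subgroup.relIndex_dvd_index_of_normal _ _
  refine ⟨inf_le_left.trans hAK, ?_, exists_eq_pow_of_dvd_pow hp (n := a + b) ?_⟩
  · exact Subgroup.normal_inf_normal (A.subgroupOf K) (B.subgroupOf K)
  · rw [← Subgroup.relIndex_inf_mul_relIndex, inf_of_le_left hBK, pow_add, ← ha, ← hb]
    exact mul_dvd_mul_right hdvd _

theorem map_mem_normalPPowIndex {p : ℕ} (e : G ≃* G) {N U : Subgroup G}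
    (hN : N ∈ normalPPowIndex p U) :
    N.map e.toMonoidHom ∈ normalPPowIndex p (U.map e.toMonoidHom) := by
  obtain ⟨hNU, hUN, n, hn⟩ := mem_normalPPowIndex_iff.1 hN
  refine mem_normalPPowIndex_iff.2 ⟨Subgroup.map_mono hNU,
    (Subgroup.map_mono hUN).trans (Subgroup.le_normalizer_map _), n, ?_⟩
  rw [Subgroup.relIndex_map_map_of_injective _ _ e.injective, hn]

theorem Ores_le {p : ℕ} (hp : p ≠ 0) {N K : Subgroup G} (hN : N ∈ normalPPowIndex p K) :
    Ores p K ≤ N := by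
  rw [Ores, if_neg hp]
  exact sInf_le hN

theorem Ores_mem_normalPPowIndex [Finite G] {p : ℕ} (hp : p.Prime) (K : Subgroup G) :
    Ores p K ∈ normalPPowIndex p K := by
  rw [Ores, if_neg hp.ne_zero]
  exact (infClosed_normalPPowIndex hp K).sInf_mem_of_nonempty (Set.toFinite _)
    ⟨K, self_mem_normalPPowIndex p K⟩ subset_rfl

theorem le_normalizer_Ores [Finite G] {p : ℕ} (hp : p.Prime) {U K : Subgroup G}
    (hK : K ≤ Subgroup.normalizer (U : Set G)) :
    K ≤ Subgroup.normalizer (Ores p U : Set G) := by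
  rw [Subgroup.le_normalizer_iff]
  intro k hk x hx
  have hU : U.map (MulAut.conj k⁻¹).toMonoidHom = U :=
    Subgroup.mem_normalizer_iff_map_conj_eq.1 (inv_mem (hK hk))
  have hmap := map_mem_normalPPowIndex (MulAut.conj k⁻¹) (Ores_mem_normalPPowIndex hp U)
  rw [hU] at hmap
  obtain ⟨y, hy, rfl⟩ := Ores_le hp.ne_zero hmap hx
  simpa [mul_assoc] using hy

theorem Ores_eq_of_mem_normalPPowIndex [Finite G] {p : ℕ} (hp : p.Prime) {U K : Subgroup G}
    (hU : U ∈ normalPPowIndex p K) : Ores p K = Ores p U := by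
  obtain ⟨hUK, hKnU, n, hn⟩ := mem_normalPPowIndex_iff.1 hU
  obtain ⟨hMU, -, m, hm⟩ := mem_normalPPowIndex_iff.1 (Ores_mem_normalPPowIndex hp U)
  obtain ⟨-, hKnM, k, hk⟩ := mem_normalPPowIndex_iff.1 (Ores_mem_normalPPowIndex hp K)
  have hMU' : Ores p K ≤ U := Ores_le hp.ne_zero hU
  refine le_antisymm (Ores_le hp.ne_zero ?_) (Ores_le hp.ne_zero ?_)
  · refine mem_normalPPowIndex_iff.2 ⟨hMU.trans hUK, le_normalizer_Ores hp hKnU, m + n, ?_⟩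
    rw [← Subgroup.relIndex_mul_relIndex _ _ _ hMU hUK, hm, hn, pow_add]
  · refine mem_normalPPowIndex_iff.2
      ⟨hMU', hUK.trans hKnM, exists_eq_pow_of_dvd_pow hp (n := k) ?_⟩
    exact hk ▸ Dvd.intro _ (Subgroup.relIndex_mul_relIndex _ _ _ hMU' hUK)

theorem commutator_cyc_le {g : G} {U : Subgroup G} (hg : g ∈ Subgroup.normalizer (U : Set G)) :
    ⁅cyc g U, cyc g U⁆ ≤ U := by
  rw [cyc, ← Subgroup.zpowers_eq_closure]
  exact commutator_sup_le_of_le_normalizer (Subgroup.zpowers_le.2 hg)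

theorem normal_subgroupOf_cyc {g : G} {U : Subgroup G}
    (hg : g ∈ Subgroup.normalizer (U : Set G)) : (U.subgroupOf (cyc g U)).Normal :=
  Subgroup.normal_subgroupOf_sup_of_le_normalizer
    ((Subgroup.closure_le _).2 (Set.singleton_subset_iff.2 hg))

theorem NL_le_normalizer (H : Subgroup G) (x : Subgroup G × L) :
    NL H x ≤ Subgroup.normalizer (x.1 : Set G) :=
  fun _ hk => Subgroup.mem_normalizer_iff_map_conj_eq.2 (congrArg Prod.fst hk.2)

theorem sylCard_of_ne_zero {p : ℕ} (hp : p ≠ 0) (n : ℕ) :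
    sylCard p n = p ^ n.factorization p :=
  if_neg hp

theorem Ores_eq_of_pRel [Finite G] [Nonempty L] {p : ℕ} {a b : Subgroup G × L}
    (h : pRel F p a b) : Ores p a.1 = Ores p b.1 := by
  obtain ⟨-, g, ⟨P, hUP, hPN, hidx, hgP⟩, rfl⟩ := h
  obtain ⟨U, t⟩ := b
  have hPU : P ≤ Subgroup.normalizer (U : Set G) := hPN.trans (NL_le_normalizer ⊤ _)
  have hUK : U ≤ cyc g U := le_sup_right
  have hKP : cyc g U ≤ P :=
    sup_le ((Subgroup.closure_le _).2 (Set.singleton_subset_iff.2 hgP)) hUP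
  have hdvd : U.relIndex (cyc g U) ∣ (U.subgroupOf P).index :=
    Dvd.intro _ (Subgroup.relIndex_mul_relIndex _ _ _ hUK hKP)
  rcases eq_or_ne p 0 with rfl | hp0
  · exact Ores_zero_eq_of_commutator_le hUK (commutator_cyc_le (hPU hgP))
  rw [hidx, sylCard_of_ne_zero hp0] at hdvd
  by_cases hp : p.Prime
  · exact Ores_eq_of_mem_normalPPowIndex hp
      ⟨hUK, normal_subgroupOf_cyc (hPU hgP), exists_eq_pow_of_dvd_pow hp hdvd⟩
  · rw [Nat.factorization_eq_zero_of_not_prime _ hp, pow_zero, Nat.dvd_one,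
      Subgroup.relIndex_eq_one] at hdvd
    rw [le_antisymm hdvd hUK]

theorem lattice_pRel_Ores_conj [Finite G] [Nonempty L]
    (K U : Subgroup G) (s t : L)
    (h : Relation.EqvGen (pRel F p) (K, s) (U, t)) :
    ∃ g : G, conjS g (Ores p U) = Ores p K := by
  refine ⟨1, ?_⟩
  rw [conjS_one]
  exact (Setoid.eqvGen_le (s := Setoid.ker fun x : Subgroup G × L => Ores p x.1)
    (fun _ _ => Ores_eq_of_pRel F) h).symm

end
end LB
end
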